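/- Let n ≥ 1, s ∈ (0,1), and let φ be a Schwartz function on ℝⁿ. Then for every multi-index α there is a constant C_α such that |D^α ψ(x)| ≤ C_α (1+|x|)^{−(n+s)} for all x ∈ ℝⁿ, where ψ(x) = ∫_{ℝⁿ} ((x_j − y_j)/|x−y|) · (φ(x) − φ(y))/|x−y|^{n+s} dy is (up to a constant factor) the j-th fractional Riesz derivative ∇^s_j φ. -/

import Mathlib

/-!
After the substitution `y = x - z` the integral becomes `T φ x = ∫ K(z) (φ(x) - φ(x - z)) dz`
with `|K(z)| ≤ |z|^(-ν)`, `ν = n + s ∈ (n, n + 1)`. Since `|φ(x) - φ(x - z)|` is bounded both by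
`‖Dφ‖_∞ |z|` and by `2 ‖φ‖_∞`, the integrand is dominated, uniformly in `x`, by a multiple of
`|z|^(-ν) min(|z|, 1)`, which is integrable precisely because `n < ν < n + 1`. Differentiating
under the integral sign then gives `D (T φ) = T (Dφ)`, so it suffices to prove the decay of `T f`
for every vector-valued Schwartz function `f`. For that, split at `|z| = (1 + |x|) / 2`: near `0`
the mean value theorem applies on a ball where `Df = O((1 + |x|)^(-ν-1))`; far away
`|z|^(-ν) ≤ 2^ν (1 + |x|)^(-ν)`, and `f` is integrable and `f(x) = O((1 + |x|)^(-ν))`.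
-/

open MeasureTheory Real Metric Set Filter Module
open scoped SchwartzMap

namespace SchwartzMap

variable {E F : Type*} [NormedAddCommGroup E] [NormedSpace ℝ E]
  [NormedAddCommGroup F] [NormedSpace ℝ F]

theorem exists_norm_le_mul_one_add_norm_rpow_neg (f : 𝓢(E, F)) (ν : ℝ) :
    ∃ C, 0 ≤ C ∧ ∀ x, ‖f x‖ ≤ C * (1 + ‖x‖) ^ (-ν) := by
  set k := ⌈ν⌉₊
  refine ⟨2 ^ k * (Finset.Iic (k, 0)).sup (fun m => SchwartzMap.seminorm ℝ m.1 m.2) f,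
    by positivity, fun x => ?_⟩
  have hx : 0 < 1 + ‖x‖ := by positivity
  have hf := one_add_le_sup_seminorm_apply (𝕜 := ℝ) (m := (k, 0)) le_rfl le_rfl f x
  rw [norm_iteratedFDeriv_zero, ← rpow_natCast] at hf
  calc ‖f x‖ = (1 + ‖x‖) ^ (-(k : ℝ)) * ((1 + ‖x‖) ^ (k : ℝ) * ‖f x‖) := by
        rw [← mul_assoc, ← rpow_add hx, neg_add_cancel, rpow_zero, one_mul]
    _ ≤ (1 + ‖x‖) ^ (-ν) * _ := by
        gcongr
        · exact le_add_of_nonneg_right (norm_nonneg x)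
        · exact Nat.le_ceil ν
    _ = _ := mul_comm _ _

/-- On the ball `‖z‖ ≤ (1 + ‖x‖) / 2` the weight `1 + ‖x - z‖` is comparable to `1 + ‖x‖`. -/
theorem exists_norm_sub_le_mul_min_one (f : 𝓢(E, F)) {ν : ℝ} (hν : 0 ≤ ν) :
    ∃ C, 0 ≤ C ∧ ∀ x z, ‖z‖ ≤ (1 + ‖x‖) / 2 →
      ‖f x - f (x - z)‖ ≤ C * (1 + ‖x‖) ^ (-ν) * min ‖z‖ 1 := by
  obtain ⟨C, hC0, hC⟩ :=
    (fderivCLM ℝ E F f).exists_norm_le_mul_one_add_norm_rpow_neg (ν + 1)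
  refine ⟨C * 2 ^ (ν + 1), by positivity, fun x z hz => ?_⟩
  have hx : 0 < 1 + ‖x‖ := by positivity
  have hderiv : ∀ y ∈ closedBall x ((1 + ‖x‖) / 2),
      ‖fderiv ℝ f y‖ ≤ C * 2 ^ (ν + 1) * (1 + ‖x‖) ^ (-(ν + 1)) := by
    intro y hy
    have hxy : (1 + ‖x‖) / 2 ≤ 1 + ‖y‖ := by
      have := norm_sub_norm_le x y
      rw [mem_closedBall, dist_eq_norm, norm_sub_rev] at hy
      linarith
    calc ‖fderiv ℝ f y‖ ≤ C * (1 + ‖y‖) ^ (-(ν + 1)) := hC y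
      _ ≤ C * ((1 + ‖x‖) / 2) ^ (-(ν + 1)) :=
          mul_le_mul_of_nonneg_left (rpow_le_rpow_of_nonpos (by positivity) hxy (by linarith)) hC0
      _ = C * 2 ^ (ν + 1) * (1 + ‖x‖) ^ (-(ν + 1)) := by
          rw [div_rpow hx.le zero_le_two, rpow_neg zero_le_two, div_inv_eq_mul]
          ring
  have hmv := (convex_closedBall x _).norm_image_sub_le_of_norm_fderiv_le
    (fun y _ => f.differentiableAt) hderiv
    (mem_closedBall_iff_norm.2 (by rwa [sub_sub_cancel_left, norm_neg]))
    (mem_closedBall_self (by positivity))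
  rw [sub_sub_cancel] at hmv
  have hz1 : ‖z‖ ≤ (1 + ‖x‖) * min ‖z‖ 1 := by
    rcases le_total ‖z‖ 1 with h | h
    · rw [min_eq_left h]; nlinarith [norm_nonneg x, norm_nonneg z]
    · rw [min_eq_right h]; linarith [norm_nonneg x]
  calc ‖f x - f (x - z)‖ ≤ C * 2 ^ (ν + 1) * (1 + ‖x‖) ^ (-(ν + 1)) * ‖z‖ := hmv
    _ ≤ C * 2 ^ (ν + 1) * (1 + ‖x‖) ^ (-(ν + 1)) * ((1 + ‖x‖) * min ‖z‖ 1) := by gcongr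
    _ = C * 2 ^ (ν + 1) * ((1 + ‖x‖) ^ (-(ν + 1)) * (1 + ‖x‖) ^ (1 : ℝ)) * min ‖z‖ 1 := by
        rw [rpow_one]; ring
    _ = C * 2 ^ (ν + 1) * (1 + ‖x‖) ^ (-ν) * min ‖z‖ 1 := by
        rw [← rpow_add hx]; ring_nf

theorem norm_sub_le_seminorm_mul_norm_sub (f : 𝓢(E, F)) (x y : E) :
    ‖f x - f y‖ ≤ SchwartzMap.seminorm ℝ 0 1 f * ‖x - y‖ :=
  convex_univ.norm_image_sub_le_of_norm_fderiv_le (fun _ _ => f.differentiableAt)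
    (fun z _ => by
      simpa [norm_iteratedFDeriv_one] using f.norm_iteratedFDeriv_le_seminorm ℝ 1 z)
    (mem_univ y) (mem_univ x)

theorem norm_smul_sub_le (f : 𝓢(E, F)) {K : E → ℝ} {ν : ℝ}
    (hK : ∀ z, |K z| ≤ ‖z‖ ^ (-ν)) (x z : E) :
    ‖K z • (f x - f (x - z))‖ ≤
      max (SchwartzMap.seminorm ℝ 0 1 f) (2 * SchwartzMap.seminorm ℝ 0 0 f) *
        (‖z‖ ^ (-ν) * min ‖z‖ 1) := by
  have hlip : ‖f x - f (x - z)‖ ≤ SchwartzMap.seminorm ℝ 0 1 f * ‖z‖ := by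
    simpa using f.norm_sub_le_seminorm_mul_norm_sub x (x - z)
  have hbdd : ‖f x - f (x - z)‖ ≤ 2 * SchwartzMap.seminorm ℝ 0 0 f := by
    linarith [norm_sub_le (f x) (f (x - z)), f.norm_le_seminorm ℝ x, f.norm_le_seminorm ℝ (x - z)]
  have hmin : ‖f x - f (x - z)‖ ≤
      max (SchwartzMap.seminorm ℝ 0 1 f) (2 * SchwartzMap.seminorm ℝ 0 0 f) * min ‖z‖ 1 := by
    rcases le_total ‖z‖ 1 with h | h
    · rw [min_eq_left h]
      exact hlip.trans (by gcongr; exact le_max_left _ _)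
    · rw [min_eq_right h, mul_one]
      exact hbdd.trans (le_max_right _ _)
  rw [norm_smul, Real.norm_eq_abs]
  calc |K z| * ‖f x - f (x - z)‖
      ≤ ‖z‖ ^ (-ν) * (max (SchwartzMap.seminorm ℝ 0 1 f) (2 * SchwartzMap.seminorm ℝ 0 0 f) *
          min ‖z‖ 1) := by gcongr; exact hK z
    _ = _ := by ring

theorem exists_norm_smul_sub_le (f : 𝓢(E, F)) {K : E → ℝ} {ν : ℝ} (hν : 0 ≤ ν)
    (hK : ∀ z, |K z| ≤ ‖z‖ ^ (-ν)) :
    ∃ C, ∀ x z, ‖K z • (f x - f (x - z))‖ ≤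
      C * (1 + ‖x‖) ^ (-ν) * (‖z‖ ^ (-ν) * min ‖z‖ 1) + ((1 + ‖x‖) / 2) ^ (-ν) * ‖f (x - z)‖ := by
  obtain ⟨C₀, hC₀0, hC₀⟩ := f.exists_norm_le_mul_one_add_norm_rpow_neg ν
  obtain ⟨C₁, hC₁0, hC₁⟩ := f.exists_norm_sub_le_mul_min_one hν
  refine ⟨C₁ + 2 * C₀, fun x z => ?_⟩
  rw [norm_smul, Real.norm_eq_abs]
  have hKz : |K z| * ‖f x - f (x - z)‖ ≤ ‖z‖ ^ (-ν) * ‖f x - f (x - z)‖ := by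
    gcongr; exact hK z
  refine hKz.trans ?_
  rcases le_or_gt ‖z‖ ((1 + ‖x‖) / 2) with hnear | hfar
  · calc ‖z‖ ^ (-ν) * ‖f x - f (x - z)‖
        ≤ ‖z‖ ^ (-ν) * (C₁ * (1 + ‖x‖) ^ (-ν) * min ‖z‖ 1) := by gcongr; exact hC₁ x z hnear
      _ ≤ _ := by nlinarith [show 0 ≤ ‖z‖ ^ (-ν) * min ‖z‖ 1 * (1 + ‖x‖) ^ (-ν) by positivity,
          show 0 ≤ ((1 + ‖x‖) / 2) ^ (-ν) * ‖f (x - z)‖ by positivity]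
  · have hmin : 1 ≤ 2 * min ‖z‖ 1 := by
      rcases le_total ‖z‖ 1 with h | h
      · rw [min_eq_left h]; linarith [norm_nonneg x]
      · rw [min_eq_right h]; norm_num
    have hzR : ‖z‖ ^ (-ν) ≤ ((1 + ‖x‖) / 2) ^ (-ν) :=
      rpow_le_rpow_of_nonpos (by positivity) hfar.le (by linarith)
    calc ‖z‖ ^ (-ν) * ‖f x - f (x - z)‖ ≤ ‖z‖ ^ (-ν) * (‖f x‖ + ‖f (x - z)‖) := by
          gcongr; exact norm_sub_le _ _
      _ ≤ ‖z‖ ^ (-ν) * (C₀ * (1 + ‖x‖) ^ (-ν) * (2 * min ‖z‖ 1)) +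
            ((1 + ‖x‖) / 2) ^ (-ν) * ‖f (x - z)‖ := by
          rw [mul_add]
          gcongr
          exact (hC₀ x).trans (le_mul_of_one_le_right (by positivity) hmin)
      _ ≤ _ := by nlinarith [show 0 ≤ ‖z‖ ^ (-ν) * min ‖z‖ 1 * (1 + ‖x‖) ^ (-ν) by positivity]

end SchwartzMap

section SingularDiffIntegral

universe u

variable {E : Type u} [NormedAddCommGroup E] [NormedSpace ℝ E] [FiniteDimensional ℝ E]
  [MeasurableSpace E] [BorelSpace E] {μ : Measure E} [μ.IsAddHaarMeasure]

theorem integrable_norm_rpow_neg_mul_min_one (hd : 1 ≤ finrank ℝ E) {ν : ℝ}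
    (hν : (finrank ℝ E : ℝ) < ν) (hν' : ν < finrank ℝ E + 1) :
    Integrable (fun z : E => ‖z‖ ^ (-ν) * min ‖z‖ 1) μ := by
  have hmeas : AEStronglyMeasurable (fun z : E => ‖z‖ ^ (-ν) * min ‖z‖ 1) μ := by
    fun_prop
  have hnear : IntegrableOn (fun z : E => ‖z‖ ^ (-ν) * min ‖z‖ 1) (ball 0 1) μ := by
    refine integrableOn_ball_of_norm_le_rpow (C := 1) (α := ν - 1) hd (by linarith)
      (Eventually.of_forall fun z => ?_) hmeas
    rcases eq_or_ne z 0 with rfl | hz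
    · simp [zero_rpow (by linarith : -ν ≠ 0), rpow_nonneg]
    have hz0 : 0 < ‖z‖ := norm_pos_iff.2 hz
    calc ‖‖z‖ ^ (-ν) * min ‖z‖ 1‖ = ‖z‖ ^ (-ν) * min ‖z‖ 1 := by
          rw [Real.norm_of_nonneg (by positivity)]
      _ ≤ ‖z‖ ^ (-ν) * ‖z‖ ^ (1 : ℝ) := by rw [rpow_one]; gcongr; exact min_le_left _ _
      _ = 1 * ‖z‖ ^ (-(ν - 1)) := by rw [← rpow_add hz0, one_mul]; ring_nf
  have hfar : IntegrableOn (fun z : E => ‖z‖ ^ (-ν) * min ‖z‖ 1) (ball 0 1)ᶜ μ := by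
    refine ((integrable_one_add_norm (μ := μ) hν).const_mul (2 ^ ν)).integrableOn.mono'
      hmeas.restrict ((ae_restrict_iff' measurableSet_ball.compl).2
        (Eventually.of_forall fun z hz => ?_))
    have hz1 : 1 ≤ ‖z‖ := by simpa using hz
    calc ‖‖z‖ ^ (-ν) * min ‖z‖ 1‖ = ‖z‖ ^ (-ν) := by
          rw [min_eq_right hz1, mul_one, Real.norm_of_nonneg (by positivity)]
      _ ≤ ((1 + ‖z‖) / 2) ^ (-ν) :=
          rpow_le_rpow_of_nonpos (by positivity) (by linarith)
            (neg_nonpos.2 ((Nat.cast_nonneg _).trans hν.le))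
      _ = 2 ^ ν * (1 + ‖z‖) ^ (-ν) := by
          rw [div_rpow (by positivity) zero_le_two, rpow_neg zero_le_two, div_inv_eq_mul, mul_comm]
  simpa using hnear.union hfar

variable {F : Type*} [NormedAddCommGroup F] [NormedSpace ℝ F]

/-- With `K z = z j / ‖z‖ ^ (n + s + 1)` this is, up to a constant, the fractional Riesz
derivative `∇^s_j f`. -/
noncomputable def singularDiffIntegral (K : E → ℝ) (μ : Measure E) (f : E → F) (x : E) : F :=
  ∫ z, K z • (f x - f (x - z)) ∂μ

variable {K : E → ℝ} {ν : ℝ}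

theorem SchwartzMap.integrable_smul_sub (hd : 1 ≤ finrank ℝ E)
    (hν : (finrank ℝ E : ℝ) < ν) (hν' : ν < finrank ℝ E + 1) (hKm : AEStronglyMeasurable K μ)
    (hK : ∀ z, |K z| ≤ ‖z‖ ^ (-ν)) (f : 𝓢(E, F)) (x : E) :
    Integrable (fun z => K z • (f x - f (x - z))) μ :=
  ((integrable_norm_rpow_neg_mul_min_one hd hν hν').const_mul _).mono'
    (hKm.smul (by fun_prop)) (Eventually.of_forall (f.norm_smul_sub_le hK x))

theorem SchwartzMap.hasFDerivAt_singularDiffIntegral (hd : 1 ≤ finrank ℝ E)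
    (hν : (finrank ℝ E : ℝ) < ν) (hν' : ν < finrank ℝ E + 1) (hKm : AEStronglyMeasurable K μ)
    (hK : ∀ z, |K z| ≤ ‖z‖ ^ (-ν)) (f : 𝓢(E, F)) (x : E) :
    HasFDerivAt (singularDiffIntegral K μ f) (singularDiffIntegral K μ (fderiv ℝ f) x) x := by
  refine hasFDerivAt_integral_of_dominated_of_fderiv_le (ball_mem_nhds x one_pos)
    (Eventually.of_forall fun y => hKm.smul (by fun_prop))
    (f.integrable_smul_sub hd hν hν' hKm hK x)
    ((SchwartzMap.fderivCLM ℝ E F f).integrable_smul_sub hd hν hν' hKm hK x).aestronglyMeasurable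
    (Eventually.of_forall fun z y _ => (SchwartzMap.fderivCLM ℝ E F f).norm_smul_sub_le hK y z)
    ((integrable_norm_rpow_neg_mul_min_one hd hν hν').const_mul _)
    (Eventually.of_forall fun z y _ => ?_)
  exact ((f.hasFDerivAt y).sub ((f.hasFDerivAt (y - z)).comp y
    ((hasFDerivAt_id y).sub_const z))).const_smul (K z) |>.congr_fderiv (by simp)

theorem SchwartzMap.exists_norm_singularDiffIntegral_le (hd : 1 ≤ finrank ℝ E)
    (hν : (finrank ℝ E : ℝ) < ν) (hν' : ν < finrank ℝ E + 1) (hKm : AEStronglyMeasurable K μ)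
    (hK : ∀ z, |K z| ≤ ‖z‖ ^ (-ν)) (f : 𝓢(E, F)) :
    ∃ C, ∀ x, ‖singularDiffIntegral K μ f x‖ ≤ C * (1 + ‖x‖) ^ (-ν) := by
  obtain ⟨C, hC⟩ := f.exists_norm_smul_sub_le ((Nat.cast_nonneg _).trans hν.le) hK
  have hB := integrable_norm_rpow_neg_mul_min_one (μ := μ) hd hν hν'
  refine ⟨C * ∫ z, ‖z‖ ^ (-ν) * min ‖z‖ 1 ∂μ + 2 ^ ν * ∫ z, ‖f z‖ ∂μ, fun x => ?_⟩
  have hfx : Integrable (fun z => ‖f (x - z)‖) μ :=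
    (integrable_comp_sub_left (fun y => ‖f y‖) x).2 f.integrable.norm
  calc ‖singularDiffIntegral K μ f x‖ ≤ ∫ z, ‖K z • (f x - f (x - z))‖ ∂μ :=
        norm_integral_le_integral_norm _
    _ ≤ ∫ z, (C * (1 + ‖x‖) ^ (-ν) * (‖z‖ ^ (-ν) * min ‖z‖ 1) +
          ((1 + ‖x‖) / 2) ^ (-ν) * ‖f (x - z)‖) ∂μ :=
        integral_mono (f.integrable_smul_sub hd hν hν' hKm hK x).norm
          ((hB.const_mul _).add (hfx.const_mul _)) (hC x)
    _ = C * (1 + ‖x‖) ^ (-ν) * ∫ z, ‖z‖ ^ (-ν) * min ‖z‖ 1 ∂μ +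
          ((1 + ‖x‖) / 2) ^ (-ν) * ∫ z, ‖f z‖ ∂μ := by
        rw [integral_add (hB.const_mul _) (hfx.const_mul _), integral_const_mul,
          integral_const_mul, integral_sub_left_eq_self (fun y => ‖f y‖) μ x]
    _ = _ := by
        rw [div_rpow (by positivity) zero_le_two, rpow_neg zero_le_two, div_inv_eq_mul]
        ring

theorem SchwartzMap.exists_norm_iteratedFDeriv_singularDiffIntegral_le (hd : 1 ≤ finrank ℝ E)
    (hν : (finrank ℝ E : ℝ) < ν) (hν' : ν < finrank ℝ E + 1) (hKm : AEStronglyMeasurable K μ)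
    (hK : ∀ z, |K z| ≤ ‖z‖ ^ (-ν)) {G : Type u} [NormedAddCommGroup G] [NormedSpace ℝ G]
    (f : 𝓢(E, G)) (k : ℕ) :
    ∃ C, ∀ x, ‖iteratedFDeriv ℝ k (singularDiffIntegral K μ f) x‖ ≤ C * (1 + ‖x‖) ^ (-ν) := by
  induction k generalizing G with
  | zero => simpa using f.exists_norm_singularDiffIntegral_le hd hν hν' hKm hK
  | succ k ih =>
    obtain ⟨C, hC⟩ := ih (SchwartzMap.fderivCLM ℝ E G f)
    have hderiv : fderiv ℝ (singularDiffIntegral K μ f) =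
        singularDiffIntegral K μ (SchwartzMap.fderivCLM ℝ E G f) :=
      funext fun x => (f.hasFDerivAt_singularDiffIntegral hd hν hν' hKm hK x).fderiv
    exact ⟨C, fun x => by rw [← norm_iteratedFDeriv_fderiv, hderiv]; exact hC x⟩

end SingularDiffIntegral

theorem EuclideanSpace.abs_apply_div_norm_div_rpow_le {n : ℕ} (j : Fin n)
    (z : EuclideanSpace ℝ (Fin n)) (ν : ℝ) : |z j / ‖z‖ / ‖z‖ ^ ν| ≤ ‖z‖ ^ (-ν) := by
  rw [abs_div, abs_div, abs_norm, abs_of_nonneg (rpow_nonneg (norm_nonneg z) ν),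
    rpow_neg (norm_nonneg z), div_eq_mul_inv]
  exact mul_le_of_le_one_left (inv_nonneg.2 (rpow_nonneg (norm_nonneg z) ν))
    (div_le_one_of_le₀ (PiLp.norm_apply_le z j) (norm_nonneg z))

/-- The fractional Riesz derivative `∇^s_j φ` of a Schwartz function, together with all of its
derivatives, decays like `(1+|x|)^{-(n+s)}`. -/
theorem iteratedFDeriv_fractionalRieszDeriv_decay
    (n : ℕ) (hn : 1 ≤ n) (s : ℝ) (hs0 : 0 < s) (hs1 : s < 1)
    (φ : SchwartzMap (EuclideanSpace ℝ (Fin n)) ℝ) (j : Fin n) (k : ℕ) :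
    ∃ C : ℝ, ∀ x : EuclideanSpace ℝ (Fin n),
      ‖iteratedFDeriv ℝ k
        (fun x : EuclideanSpace ℝ (Fin n) =>
          ∫ y : EuclideanSpace ℝ (Fin n),
            ((x j - y j) / ‖x - y‖) * ((φ x - φ y) / ‖x - y‖ ^ ((n : ℝ) + s))) x‖ ≤
        C * (1 + ‖x‖) ^ (-((n : ℝ) + s)) := by
  set K : EuclideanSpace ℝ (Fin n) → ℝ := fun z => z j / ‖z‖ / ‖z‖ ^ ((n : ℝ) + s)
  have hrepr : (fun x : EuclideanSpace ℝ (Fin n) =>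
      ∫ y : EuclideanSpace ℝ (Fin n),
        ((x j - y j) / ‖x - y‖) * ((φ x - φ y) / ‖x - y‖ ^ ((n : ℝ) + s))) =
      singularDiffIntegral K volume φ := by
    funext x
    rw [singularDiffIntegral, ← integral_sub_left_eq_self _ volume x]
    congr 1 with y
    simp only [K, sub_sub_cancel, smul_eq_mul, PiLp.sub_apply]
    ring
  rw [hrepr]
  exact φ.exists_norm_iteratedFDeriv_singularDiffIntegral_le (by simpa using hn)
    (by simpa using hs0) (by simpa using hs1)
    (by fun_prop : Measurable K).aestronglyMeasurable
    (fun z => EuclideanSpace.abs_apply_div_norm_div_rpow_le j z _) k
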